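/- Let v_A be Alice's density with δ ≤ v_A ≤ Δ and ∫_0^1 v_A = 1. There exists a pure Alice strategy S_A, depending only on v_A (defined for every round, independent of any horizon), such that for every infinite sequence of Bob choices b : {1,2,…} → {L,R} (with Alice's cuts a_t generated by S_A from the history) and for every t ≥ 3: (i) for every Bob density v_B with 0 ≤ v_B(x) ≤ Δ for all x and ∫_0^1 v_B = 1, the cumulative payoff of a Bob with density v_B satisfies Σ_{i=1}^t u_B^i ≤ t·(1/2 + (5Δ+11)/ln(2t/5)); and (ii) Alice's cumulative payoff satisfies Σ_{i=1}^t u_A^i ≥ t·(1/2 − 4/√(t−1)). -/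

import Mathlib

/-!
Alice runs online gradient descent with the doubling trick. For a cumulative distribution
function `F` on `[0,1]` with density at most `Δ`, the potential `K x = ∫₀ˣ (F - 1/2)` is
convex with `Δ`-Lipschitz derivative, and Bob's excess `±(F c - 1/2)` over `1/2` in a round is
the derivative of `K` in the direction in which Alice then moves the cut. A move by `η`
therefore decreases `K` by at least `η` times that excess, up to `Δη²`, and over an epoch with
constant step size the excess telescopes into a potential difference divided by `η`.

Epoch `k` consists of the rounds `2^k, …, 2^(k+1) - 1`, uses step size `1/(Δ √2^k)` and starts
at Alice's median `m`. For any Bob the potential varies by at most `1/2`, so his excess is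
`O((1 + Δ) √t)`. Alice's payoff is `1` minus the payoff of a Bob with her own valuation, and
for that valuation `K` is minimal at `m`: restarts cost nothing and her deficit is `O(√t)`.
-/

open MeasureTheory

/-- Bob's choice of the left or right piece. -/
inductive Choice
  | L
  | R
deriving DecidableEq

instance : Fintype Choice :=
  ⟨{Choice.L, Choice.R}, fun x => by cases x <;> simp⟩

/-- The cumulative valuation `V(x) = ∫_0^x v`. -/
noncomputable def cumul (v : ℝ → ℝ) (x : ℝ) : ℝ := ∫ y in (0:ℝ)..x, v y

/-- `v` is an integrable value density on `[0,1]`, bounded between `lo` and `hi`,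
integrating to `1`. -/
def IsDensity (lo hi : ℝ) (v : ℝ → ℝ) : Prop :=
  IntervalIntegrable v volume 0 1 ∧
  (∀ x ∈ Set.Icc (0:ℝ) 1, lo ≤ v x ∧ v x ≤ hi) ∧
  (∫ y in (0:ℝ)..1, v y) = 1

/-- Alice's round-`t` utility: if Bob picks `L` she gets `[a_t,1]`, else `[0,a_t]`. -/
noncomputable def uA (vA : ℝ → ℝ) (a : ℕ → ℝ) (b : ℕ → Choice) (t : ℕ) : ℝ :=
  if b t = Choice.L then 1 - cumul vA (a t) else cumul vA (a t)

/-- Bob's round-`t` utility: if he picks `L` he gets `[0,a_t]`, else `[a_t,1]`. -/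
noncomputable def uB (vB : ℝ → ℝ) (a : ℕ → ℝ) (b : ℕ → Choice) (t : ℕ) : ℝ :=
  if b t = Choice.L then cumul vB (a t) else 1 - cumul vB (a t)

/-- A pure Alice strategy: given the history `(a_1,…,a_t; b_1,…,b_t)`, produce the
next cut `a_{t+1}`. -/
def AliceStrategy : Type := ∀ t : ℕ, (Fin t → ℝ) → (Fin t → Choice) → ℝ

/-- A pure (sequential) Bob strategy: given `(a_1,…,a_{t+1}; b_1,…,b_t)`, produce the
next choice `b_{t+1}`. -/
def BobStrategy : Type := ∀ t : ℕ, (Fin (t+1) → ℝ) → (Fin t → Choice) → Choice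

/-- The trajectory `(a,b)` is consistent with Alice's strategy `S` over horizon `T`. -/
def AliceConsistent (S : AliceStrategy) (a : ℕ → ℝ) (b : ℕ → Choice) (T : ℕ) : Prop :=
  ∀ t : ℕ, t < T → a (t+1) = S t (fun i => a (i.1+1)) (fun i => b (i.1+1))

/-- The trajectory `(a,b)` is consistent with Bob's strategy `S` over horizon `T`. -/
def BobConsistent (S : BobStrategy) (a : ℕ → ℝ) (b : ℕ → Choice) (T : ℕ) : Prop :=
  ∀ t : ℕ, t < T → b (t+1) = S t (fun i => a (i.1+1)) (fun i => b (i.1+1))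

/-- Alice's Stackelberg value `u_A^* = max(V_A(m_B), 1 - V_A(m_B))`. -/
noncomputable def stackValue (vA : ℝ → ℝ) (mB : ℝ) : ℝ :=
  max (cumul vA mB) (1 - cumul vA mB)

open Set

structure IsSlopeBoundedCDF (Δ : ℝ) (F : ℝ → ℝ) : Prop where
  map_zero : F 0 = 0
  map_one : F 1 = 1
  monotoneOn : MonotoneOn F (Icc 0 1)
  sub_le : ∀ ⦃x : ℝ⦄, x ∈ Icc 0 1 → ∀ ⦃y : ℝ⦄, y ∈ Icc 0 1 → x ≤ y →
    F y - F x ≤ Δ * (y - x)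

theorem uIcc_subset_uIcc_zero_one {x y : ℝ} (hx : x ∈ Icc 0 1) (hy : y ∈ Icc 0 1) :
    uIcc x y ⊆ uIcc 0 1 :=
  (uIcc_subset_Icc hx hy).trans Icc_subset_uIcc

theorem cumul_sub_cumul {v : ℝ → ℝ} (hv : IntervalIntegrable v volume 0 1) {x y : ℝ}
    (hx : x ∈ Icc 0 1) (hy : y ∈ Icc 0 1) :
    cumul v y - cumul v x = ∫ u in x..y, v u :=
  have h0 : (0 : ℝ) ∈ Icc 0 1 := left_mem_Icc.2 zero_le_one
  intervalIntegral.integral_interval_sub_left (hv.mono_set (uIcc_subset_uIcc_zero_one h0 hy))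
    (hv.mono_set (uIcc_subset_uIcc_zero_one h0 hx))

theorem isSlopeBoundedCDF_cumul {Δ : ℝ} {v : ℝ → ℝ} (hv : IntervalIntegrable v volume 0 1)
    (hbd : ∀ x ∈ Icc (0 : ℝ) 1, 0 ≤ v x ∧ v x ≤ Δ)
    (htot : ∫ y in (0 : ℝ)..1, v y = 1) :
    IsSlopeBoundedCDF Δ (cumul v) where
  map_zero := intervalIntegral.integral_same
  map_one := htot
  monotoneOn x hx y hy hxy := by
    have := intervalIntegral.integral_nonneg (μ := volume) hxy fun u hu =>
      (hbd u ⟨hx.1.trans hu.1, hu.2.trans hy.2⟩).1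
    linarith [cumul_sub_cumul hv hx hy]
  sub_le x hx y hy hxy := by
    have := intervalIntegral.integral_mono_on hxy (hv.mono_set (uIcc_subset_uIcc_zero_one hx hy))
      intervalIntegrable_const fun u hu => (hbd u ⟨hx.1.trans hu.1, hu.2.trans hy.2⟩).2
    rw [intervalIntegral.integral_const, smul_eq_mul] at this
    linarith [cumul_sub_cumul hv hx hy]

theorem exists_cumul_eq_half {v : ℝ → ℝ} (hv : IntervalIntegrable v volume 0 1)
    (htot : ∫ y in (0 : ℝ)..1, v y = 1) : ∃ m ∈ Icc (0 : ℝ) 1, cumul v m = 1 / 2 := by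
  have hcont : ContinuousOn (cumul v) (uIcc 0 1) :=
    intervalIntegral.continuousOn_primitive_interval
      ((intervalIntegrable_iff_integrableOn_Icc_of_le zero_le_one).1 hv |>.mono_set
        (uIcc_of_le zero_le_one).subset)
  rw [uIcc_of_le zero_le_one] at hcont
  refine intermediate_value_Icc zero_le_one hcont ⟨?_, ?_⟩
  · simp only [cumul, intervalIntegral.integral_same]; norm_num
  · rw [cumul, htot]; norm_num

noncomputable def potential (F : ℝ → ℝ) (x : ℝ) : ℝ := ∫ y in 0..x, (F y - 1 / 2)

namespace IsSlopeBoundedCDF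

variable {Δ : ℝ} {F : ℝ → ℝ} (hF : IsSlopeBoundedCDF Δ F)
include hF

theorem one_le : 1 ≤ Δ := by
  have := hF.sub_le (left_mem_Icc.2 zero_le_one) (right_mem_Icc.2 zero_le_one) zero_le_one
  rw [hF.map_zero, hF.map_one] at this
  linarith

theorem abs_sub_half_le {x : ℝ} (hx : x ∈ Icc 0 1) : |F x - 1 / 2| ≤ 1 / 2 := by
  have h0 := hF.monotoneOn (left_mem_Icc.2 zero_le_one) hx hx.1
  have h1 := hF.monotoneOn hx (right_mem_Icc.2 zero_le_one) hx.2
  rw [hF.map_zero] at h0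
  rw [hF.map_one] at h1
  rw [abs_le]
  constructor <;> linarith

theorem abs_sub_le {x y : ℝ} (hx : x ∈ Icc 0 1) (hy : y ∈ Icc 0 1) :
    |F y - F x| ≤ Δ * |y - x| := by
  rcases le_total x y with hxy | hyx
  · rw [abs_of_nonneg (sub_nonneg.2 (hF.monotoneOn hx hy hxy)), abs_of_nonneg (sub_nonneg.2 hxy)]
    exact hF.sub_le hx hy hxy
  · rw [abs_sub_comm, abs_sub_comm y, abs_of_nonneg (sub_nonneg.2 (hF.monotoneOn hy hx hyx)),
      abs_of_nonneg (sub_nonneg.2 hyx)]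
    exact hF.sub_le hy hx hyx

theorem intervalIntegrable_sub_half {x y : ℝ} (hx : x ∈ Icc 0 1)
    (hy : y ∈ Icc 0 1) : IntervalIntegrable (fun u => F u - 1 / 2) volume x y :=
  ((hF.monotoneOn.mono (uIcc_subset_Icc hx hy)).intervalIntegrable).sub intervalIntegrable_const

theorem potential_sub_potential {x y : ℝ} (hx : x ∈ Icc 0 1) (hy : y ∈ Icc 0 1) :
    potential F y - potential F x = ∫ u in x..y, (F u - 1 / 2) :=
  have h0 : (0 : ℝ) ∈ Icc 0 1 := left_mem_Icc.2 zero_le_one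
  intervalIntegral.integral_interval_sub_left (hF.intervalIntegrable_sub_half h0 hy)
    (hF.intervalIntegrable_sub_half h0 hx)

theorem potential_sub_potential_le_half {x y : ℝ} (hx : x ∈ Icc 0 1)
    (hy : y ∈ Icc 0 1) : potential F x - potential F y ≤ 1 / 2 := by
  rw [hF.potential_sub_potential hy hx]
  have hbound := intervalIntegral.norm_integral_le_of_norm_le_const (a := y) (b := x)
    (f := fun u => F u - 1 / 2)
    fun u hu => hF.abs_sub_half_le (uIcc_subset_Icc hy hx (uIoc_subset_uIcc hu))
  have hxy : |x - y| ≤ 1 :=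
    abs_sub_le_iff.2 ⟨by linarith [hx.2, hy.1], by linarith [hx.1, hy.2]⟩
  rw [Real.norm_eq_abs] at hbound
  linarith [le_abs_self (∫ u in y..x, (F u - 1 / 2))]

theorem potential_le_of_map_eq_half {m x : ℝ} (hm : m ∈ Icc 0 1) (hFm : F m = 1 / 2)
    (hx : x ∈ Icc 0 1) : potential F m ≤ potential F x := by
  rcases le_total m x with hmx | hxm
  · have := intervalIntegral.integral_nonneg (μ := volume) hmx fun u hu =>
      sub_nonneg.2 (hFm ▸ hF.monotoneOn hm ⟨hm.1.trans hu.1, hu.2.trans hx.2⟩ hu.1)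
    linarith [hF.potential_sub_potential hm hx]
  · have := intervalIntegral.integral_mono_on hxm (hF.intervalIntegrable_sub_half hx hm)
      intervalIntegrable_const fun u hu =>
        sub_nonpos.2 (hFm ▸ hF.monotoneOn ⟨hx.1.trans hu.1, hu.2.trans hm.2⟩ hm hu.2)
    rw [intervalIntegral.integral_const, smul_zero] at this
    linarith [hF.potential_sub_potential hx hm]

theorem sub_le_potential_sub_potential {x y : ℝ} (hx : x ∈ Icc 0 1)
    (hy : y ∈ Icc 0 1) :
    (y - x) * (F y - 1 / 2) - Δ * (y - x) ^ 2 ≤ potential F y - potential F x := by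
  have hint : IntervalIntegrable F volume x y :=
    (hF.monotoneOn.mono (uIcc_subset_Icc hx hy)).intervalIntegrable
  have hsplit : ∫ u in x..y, (F u - 1 / 2)
      = (y - x) * (F y - 1 / 2) + ∫ u in x..y, (F u - F y) := by
    simp only [intervalIntegral.integral_sub hint intervalIntegrable_const,
      intervalIntegral.integral_const, smul_eq_mul]
    ring
  have herr : ‖∫ u in x..y, (F u - F y)‖ ≤ Δ * |y - x| * |y - x| :=
    intervalIntegral.norm_integral_le_of_norm_le_const fun u hu => by
      have hu' := uIoc_subset_uIcc hu
      rw [Real.norm_eq_abs, abs_sub_comm]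
      calc |F y - F u| ≤ Δ * |y - u| := hF.abs_sub_le (uIcc_subset_Icc hx hy hu') hy
        _ ≤ Δ * |y - x| :=
          mul_le_mul_of_nonneg_left (abs_sub_right_of_mem_uIcc hu') (by linarith [hF.one_le])
  rw [Real.norm_eq_abs, mul_assoc, ← sq, sq_abs] at herr
  rw [hF.potential_sub_potential hx hy, hsplit]
  linarith [neg_abs_le (∫ u in x..y, (F u - F y))]

end IsSlopeBoundedCDF

def Choice.sign : Choice → ℝ
  | .L => 1
  | .R => -1

/-- Alice moves the cut by `η` so as to shrink the piece Bob just took. -/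
noncomputable def nextCut (η c : ℝ) : Choice → ℝ
  | .L => max 0 (c - η)
  | .R => min 1 (c + η)

theorem nextCut_mem {η c : ℝ} (hη : 0 ≤ η) (hc : c ∈ Icc 0 1) (ch : Choice) :
    nextCut η c ch ∈ Icc 0 1 := by
  cases ch
  · exact ⟨le_max_left _ _, max_le zero_le_one (by linarith [hc.2])⟩
  · exact ⟨le_min zero_le_one (by linarith [hc.1]), min_le_left _ _⟩

namespace IsSlopeBoundedCDF

variable {Δ : ℝ} {F : ℝ → ℝ} (hF : IsSlopeBoundedCDF Δ F)
include hF

/-- The descent inequality for `potential F`, whose derivative is `F - 1/2`. When the step is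
clamped at an end of the cake, `F 0 = 0` or `F 1 = 1` and the slope bound control the excess. -/
theorem sign_mul_le_potential_sub_div {η c : ℝ} (hη : 0 < η) (hc : c ∈ Icc 0 1)
    (ch : Choice) :
    ch.sign * (F c - 1 / 2) ≤ (potential F c - potential F (nextCut η c ch)) / η + Δ * η := by
  rw [← sub_le_iff_le_add, le_div_iff₀ hη]
  have hc' := nextCut_mem hη.le hc ch
  have htaylor := hF.sub_le_potential_sub_potential hc' hc
  cases ch
  · simp only [Choice.sign, nextCut, one_mul] at htaylor hc' ⊢
    rcases le_total η c with hηc | hcη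
    · rw [max_eq_right (by linarith)] at htaylor ⊢
      nlinarith
    · rw [max_eq_left (by linarith)] at htaylor ⊢
      have hFc := hF.sub_le (left_mem_Icc.2 zero_le_one) hc hc.1
      rw [hF.map_zero] at hFc
      have hΔ := hF.one_le
      nlinarith [mul_nonneg (sub_nonneg.2 hcη)
        (show 0 ≤ Δ * (η + c) - (F c - 1 / 2) by nlinarith)]
  · simp only [Choice.sign, nextCut, neg_one_mul] at htaylor hc' ⊢
    rcases le_total (c + η) 1 with hcη | hηc
    · rw [min_eq_right hcη] at htaylor ⊢
      nlinarith
    · rw [min_eq_left hηc] at htaylor ⊢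
      have hFc := hF.sub_le hc (right_mem_Icc.2 zero_le_one) hc.2
      rw [hF.map_one] at hFc
      have hΔ := hF.one_le
      nlinarith [mul_nonneg (show 0 ≤ c + η - 1 by linarith)
        (show 0 ≤ Δ * (η + 1 - c) + (F c - 1 / 2) by nlinarith)]

end IsSlopeBoundedCDF

theorem Nat.log_two_succ_of_ne_pow {n : ℕ} (h : n + 1 ≠ 2 ^ Nat.log 2 (n + 1)) :
    Nat.log 2 (n + 1) = Nat.log 2 n := by
  have hle := Nat.pow_log_le_self 2 (n.add_one_ne_zero)
  have hlt := Nat.lt_pow_succ_log_self one_lt_two (n + 1)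
  exact (Nat.log_eq_of_pow_le_of_lt_pow (by omega) (by omega)).symm

theorem Nat.log_two_succ_of_eq_pow {n : ℕ} (hn : n ≠ 0) (h : n + 1 = 2 ^ Nat.log 2 (n + 1)) :
    Nat.log 2 (n + 1) = Nat.log 2 n + 1 := by
  obtain ⟨k, hk⟩ : ∃ k, Nat.log 2 (n + 1) = k + 1 :=
    Nat.exists_eq_add_one.2 (Nat.pos_of_ne_zero fun h0 => by rw [h0] at h; omega)
  rw [hk, pow_succ] at h
  rw [hk, Nat.log_eq_of_pow_le_of_lt_pow (b := 2) (m := k) (by omega) (by rw [pow_succ]; omega)]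

/-- The cuts of Alice's strategy: round `i` lies in epoch `Nat.log 2 i`, which uses step size
`η (Nat.log 2 i)`, and every epoch starts afresh at `m` (the value at index `0` is unused). -/
noncomputable def cutSeq (η : ℕ → ℝ) (m : ℝ) (b : ℕ → Choice) : ℕ → ℝ
  | 0 => m
  | i + 1 => if i + 1 = 2 ^ Nat.log 2 (i + 1) then m
      else nextCut (η (Nat.log 2 i)) (cutSeq η m b i) (b i)

section cutSeq

variable {η : ℕ → ℝ} {m : ℝ} {b : ℕ → Choice}

theorem cutSeq_one : cutSeq η m b 1 = m := by
  simp [cutSeq]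

theorem cutSeq_mem (hη : ∀ k, 0 ≤ η k) (hm : m ∈ Icc 0 1) (i : ℕ) :
    cutSeq η m b i ∈ Icc 0 1 := by
  induction i with
  | zero => exact hm
  | succ i ih =>
    rw [cutSeq]
    split_ifs
    · exact hm
    · exact nextCut_mem (hη _) ih _

theorem cutSeq_congr {b' : ℕ → Choice} {n : ℕ} (h : ∀ i, 1 ≤ i → i < n → b i = b' i) :
    cutSeq η m b n = cutSeq η m b' n := by
  induction n with
  | zero => rfl
  | succ n ih =>
    rw [cutSeq, cutSeq]
    split_ifs with hpow
    · rfl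
    · have hn : n ≠ 0 := by rintro rfl; simp at hpow
      rw [ih fun i hi hin => h i hi (by omega), h n (by omega) (by omega)]

end cutSeq

namespace IsSlopeBoundedCDF

variable {Δ : ℝ} {F : ℝ → ℝ} (hF : IsSlopeBoundedCDF Δ F)
  {η : ℕ → ℝ} (hη : ∀ k, 0 < η k) {m B : ℝ} (hm : m ∈ Icc 0 1)
  (hB : ∀ x ∈ Icc (0 : ℝ) 1, potential F m - potential F x ≤ B) (b : ℕ → Choice)
include hF hη hm hB

/-- Within an epoch the potential terms telescope; a restart at `m` costs at most `B / η k`,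
where `k` is the epoch that ends. -/
theorem sum_sign_mul_add_potential_le (t : ℕ) :
    ∑ i ∈ Finset.Icc 1 t, (b i).sign * (F (cutSeq η m b i) - 1 / 2)
        + (potential F (cutSeq η m b (t + 1)) - potential F m) / η (Nat.log 2 (t + 1))
      ≤ ∑ i ∈ Finset.Icc 1 t, Δ * η (Nat.log 2 i)
        + ∑ j ∈ Finset.range (Nat.log 2 (t + 1)), B / η j := by
  induction t with
  | zero => simp [cutSeq_one]
  | succ t ih =>
    set n := t + 1
    set c := cutSeq η m b n
    set c' := nextCut (η (Nat.log 2 n)) c (b n)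
    have hc := cutSeq_mem (fun k => (hη k).le) hm n (b := b)
    have hstep := hF.sign_mul_le_potential_sub_div (hη (Nat.log 2 n)) hc (b n)
    have hsplit : (potential F c - potential F c') / η (Nat.log 2 n)
        = (potential F c - potential F m) / η (Nat.log 2 n)
          + (potential F m - potential F c') / η (Nat.log 2 n) := by ring
    rw [Finset.sum_Icc_succ_top (by omega), Finset.sum_Icc_succ_top (by omega)]
    by_cases hpow : n + 1 = 2 ^ Nat.log 2 (n + 1)
    · have hrestart : cutSeq η m b (n + 1) = m := by rw [cutSeq, if_pos hpow]
      have hcost := div_le_div_of_nonneg_right (hB c' (nextCut_mem (hη _).le hc _))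
        (hη (Nat.log 2 n)).le
      rw [hrestart, Nat.log_two_succ_of_eq_pow (by omega) hpow, Finset.sum_range_succ, sub_self,
        zero_div, add_zero]
      linarith
    · have hnext : cutSeq η m b (n + 1) = c' := by rw [cutSeq, if_neg hpow]
      rw [hnext, Nat.log_two_succ_of_ne_pow hpow]
      have : (potential F m - potential F c') / η (Nat.log 2 n)
          = -((potential F c' - potential F m) / η (Nat.log 2 n)) := by ring
      linarith

theorem sum_sign_mul_le (t : ℕ) :
    ∑ i ∈ Finset.Icc 1 t, (b i).sign * (F (cutSeq η m b i) - 1 / 2)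
      ≤ ∑ i ∈ Finset.Icc 1 t, Δ * η (Nat.log 2 i)
        + ∑ j ∈ Finset.range (Nat.log 2 (t + 1) + 1), B / η j := by
  have hlast := div_le_div_of_nonneg_right
    (hB _ (cutSeq_mem (fun k => (hη k).le) hm (t + 1) (b := b))) (hη (Nat.log 2 (t + 1))).le
  have : (potential F m - potential F (cutSeq η m b (t + 1))) / η (Nat.log 2 (t + 1))
      = -((potential F (cutSeq η m b (t + 1)) - potential F m) / η (Nat.log 2 (t + 1))) := by ring
  rw [Finset.sum_range_succ]
  linarith [hF.sum_sign_mul_add_potential_le hη hm hB b t]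

end IsSlopeBoundedCDF

theorem sq_sqrt_two_pow (k : ℕ) : (√2 ^ k) ^ 2 = 2 ^ k := by
  rw [← pow_mul, mul_comm, pow_mul, Real.sq_sqrt zero_le_two]

theorem sqrt_two_pow_log_le_sqrt {n : ℕ} (hn : n ≠ 0) : √2 ^ Nat.log 2 n ≤ √n := by
  rw [Real.le_sqrt (by positivity) n.cast_nonneg, sq_sqrt_two_pow]
  exact_mod_cast Nat.pow_log_le_self 2 hn

theorem sqrt_lt_sqrt_two_pow_log_succ (n : ℕ) : √n < √2 ^ (Nat.log 2 n + 1) := by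
  rw [Real.sqrt_lt' (by positivity), sq_sqrt_two_pow]
  exact_mod_cast Nat.lt_pow_succ_log_self one_lt_two n

theorem sum_one_div_sqrt_le (t : ℕ) : ∑ i ∈ Finset.Icc 1 t, 1 / √i ≤ 2 * √t := by
  induction t with
  | zero => simp
  | succ t ih =>
    rw [Finset.sum_Icc_succ_top (by omega), Nat.cast_succ]
    have hlt : √t < √(t + 1) := Real.sqrt_lt_sqrt t.cast_nonneg (lt_add_one _)
    have hsq : √(t + 1) * √(t + 1) = (t : ℝ) + 1 := Real.mul_self_sqrt (by positivity)
    have hpos : 0 < √((t : ℝ) + 1) := by positivity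
    have hterm : 1 / √((t : ℝ) + 1) ≤ 2 * √(t + 1) - 2 * √t := by
      rw [div_le_iff₀ hpos]
      nlinarith [Real.mul_self_sqrt t.cast_nonneg, Real.sqrt_nonneg t]
    linarith

theorem sum_sqrt_two_pow_le (L : ℕ) :
    ∑ j ∈ Finset.range (L + 1), √2 ^ j ≤ (2 + √2) * √2 ^ L := by
  induction L with
  | zero =>
    simp only [zero_add, Finset.sum_range_one, pow_zero, mul_one]
    linarith [Real.sqrt_nonneg 2]
  | succ L ih =>
    rw [Finset.sum_range_succ, pow_succ]
    nlinarith [Real.mul_self_sqrt zero_le_two, pow_nonneg (Real.sqrt_nonneg 2) L]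

noncomputable def stepSize (Δ : ℝ) (k : ℕ) : ℝ := (Δ * √2 ^ k)⁻¹

theorem stepSize_pos {Δ : ℝ} (hΔ : 0 < Δ) (k : ℕ) : 0 < stepSize Δ k := by
  unfold stepSize; positivity

theorem sum_mul_stepSize_le {Δ : ℝ} (hΔ : 0 < Δ) (t : ℕ) :
    ∑ i ∈ Finset.Icc 1 t, Δ * stepSize Δ (Nat.log 2 i) ≤ 2 * √2 * √t := by
  calc ∑ i ∈ Finset.Icc 1 t, Δ * stepSize Δ (Nat.log 2 i)
      ≤ ∑ i ∈ Finset.Icc 1 t, √2 * (1 / √i) := by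
        refine Finset.sum_le_sum fun i hi => ?_
        have hi : 0 < √(i : ℝ) := Real.sqrt_pos.2 (by exact_mod_cast (Finset.mem_Icc.1 hi).1)
        have hlt := sqrt_lt_sqrt_two_pow_log_succ i
        rw [pow_succ] at hlt
        rw [stepSize, mul_inv, ← mul_assoc, mul_inv_cancel₀ hΔ.ne', one_mul, mul_one_div,
          inv_eq_one_div, div_le_div_iff₀ (by positivity) hi]
        linarith
    _ = √2 * ∑ i ∈ Finset.Icc 1 t, 1 / √i := by rw [Finset.mul_sum]
    _ ≤ 2 * √2 * √t := by nlinarith [sum_one_div_sqrt_le t, Real.sqrt_nonneg 2]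

theorem sum_half_div_stepSize_le {Δ : ℝ} (hΔ : 0 ≤ Δ) (t : ℕ) :
    ∑ j ∈ Finset.range (Nat.log 2 (t + 1) + 1), 1 / 2 / stepSize Δ j
      ≤ (1 + √2 / 2) * Δ * √(t + 1) := by
  have hL := sqrt_two_pow_log_le_sqrt t.add_one_ne_zero
  push_cast at hL
  calc ∑ j ∈ Finset.range (Nat.log 2 (t + 1) + 1), 1 / 2 / stepSize Δ j
      = Δ / 2 * ∑ j ∈ Finset.range (Nat.log 2 (t + 1) + 1), √2 ^ j := by
        rw [Finset.mul_sum]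
        refine Finset.sum_congr rfl fun j _ => ?_
        rw [stepSize, div_inv_eq_mul]
        ring
    _ ≤ Δ / 2 * ((2 + √2) * √2 ^ Nat.log 2 (t + 1)) := by
        gcongr
        exact sum_sqrt_two_pow_le _
    _ ≤ (1 + √2 / 2) * Δ * √(t + 1) := by
        have : 0 ≤ Δ / 2 * (2 + √2) := by positivity
        nlinarith

theorem two_mul_sqrt_two_mul_sqrt_le_div_sqrt_sub_one {x : ℝ} (hx : 1 < x) :
    2 * √2 * √x ≤ 4 * x / √(x - 1) := by
  have hpos : 0 < √(x - 1) := Real.sqrt_pos.2 (by linarith)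
  have hle : √(x - 1) ≤ √x := Real.sqrt_le_sqrt (by linarith)
  have hsqrt2 : √2 ≤ 2 := by rw [Real.sqrt_le_left zero_le_two]; norm_num
  have hprod : √x * √(x - 1) ≤ x := by
    calc √x * √(x - 1) ≤ √x * √x := mul_le_mul_of_nonneg_left hle (Real.sqrt_nonneg x)
      _ = x := Real.mul_self_sqrt (by linarith)
  rw [le_div_iff₀ hpos, mul_assoc (2 * √2)]
  calc 2 * √2 * (√x * √(x - 1)) ≤ 2 * 2 * x := by gcongr
    _ = 4 * x := by ring

theorem log_le_two_mul_sqrt {x : ℝ} (hx : 0 < x) : Real.log x ≤ 2 * √x := by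
  have := Real.log_le_sub_one_of_pos (Real.sqrt_pos.2 hx)
  rw [Real.log_sqrt hx.le] at this
  linarith

theorem two_mul_sqrt_two_mul_sqrt_add_le_div_log {Δ x : ℝ} (hΔ : 0 ≤ Δ) (hx : 3 ≤ x) :
    2 * √2 * √x + (1 + √2 / 2) * Δ * √(x + 1)
      ≤ (5 * Δ + 11) * x / Real.log (2 * x / 5) := by
  have hsqrt : √x * √x = x := Real.mul_self_sqrt (by linarith)
  have hsx : 0 < √x := Real.sqrt_pos.2 (by linarith)
  have hlog_pos : 0 < Real.log (2 * x / 5) := Real.log_pos (by linarith)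
  have hlog : Real.log (2 * x / 5) ≤ 2 * √x :=
    (log_le_two_mul_sqrt (by linarith)).trans (by gcongr; linarith)
  have hsqrt2 : √2 ≤ 3 / 2 := by rw [Real.sqrt_le_left (by norm_num)]; norm_num
  have hx1 : √(x + 1) ≤ √2 * √x := by
    rw [← Real.sqrt_mul zero_le_two]; exact Real.sqrt_le_sqrt (by linarith)
  calc 2 * √2 * √x + (1 + √2 / 2) * Δ * √(x + 1)
      ≤ 2 * √2 * √x + (1 + √2 / 2) * Δ * (√2 * √x) := by gcongr
    _ ≤ (5 * Δ + 11) * x / (2 * √x) := by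
        have hsqrt2_sq : √2 * √2 = 2 := Real.mul_self_sqrt zero_le_two
        rw [le_div_iff₀ (by positivity)]
        calc (2 * √2 * √x + (1 + √2 / 2) * Δ * (√2 * √x)) * (2 * √x)
            = (4 * √2 + 2 * (√2 + 1) * Δ) * x := by
              linear_combination
                (4 * √2 + 2 * Δ * √2 + Δ * √2 * √2) * hsqrt + Δ * x * hsqrt2_sq
          _ ≤ (5 * Δ + 11) * x := by
              have hcoef : 0 ≤ (11 - 4 * √2) + (3 - 2 * √2) * Δ := by nlinarith
              nlinarith [mul_nonneg hcoef (by linarith : (0 : ℝ) ≤ x)]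
    _ ≤ (5 * Δ + 11) * x / Real.log (2 * x / 5) := by gcongr

/-- Alice replays the cut sequence on Bob's past choices; choices not yet made are irrelevant
and padded with `L`. -/
noncomputable def descentStrategy (η : ℕ → ℝ) (m : ℝ) : AliceStrategy :=
  fun t _ hb => cutSeq η m (fun i => if h : i - 1 < t then hb ⟨i - 1, h⟩ else .L) (t + 1)

theorem eq_cutSeq_of_forall_eq_descentStrategy {η : ℕ → ℝ} {m : ℝ} {a : ℕ → ℝ}
    {b : ℕ → Choice}
    (h : ∀ t, a (t + 1) = descentStrategy η m t (fun i => a (i.1 + 1)) (fun i => b (i.1 + 1)))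
    {i : ℕ} (hi : 1 ≤ i) : a i = cutSeq η m b i := by
  obtain ⟨t, rfl⟩ := Nat.exists_eq_add_of_le' hi
  rw [h t]
  refine cutSeq_congr fun j hj hjt => ?_
  rw [dif_pos (by omega)]
  exact congrArg b (Nat.sub_add_cancel hj)

theorem sum_uB_eq (v : ℝ → ℝ) (a : ℕ → ℝ) (b : ℕ → Choice) (t : ℕ) :
    ∑ i ∈ Finset.Icc 1 t, uB v a b i
      = t / 2 + ∑ i ∈ Finset.Icc 1 t, (b i).sign * (cumul v (a i) - 1 / 2) := by
  have huB : ∀ i, uB v a b i = 1 / 2 + (b i).sign * (cumul v (a i) - 1 / 2) := fun i => by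
    unfold uB; cases b i <;> simp only [Choice.sign, reduceCtorEq, if_true, if_false] <;> ring
  simp only [huB, Finset.sum_add_distrib, Finset.sum_const, Nat.card_Icc, nsmul_eq_mul,
    add_tsub_cancel_right]
  ring

theorem sum_uA_eq (v : ℝ → ℝ) (a : ℕ → ℝ) (b : ℕ → Choice) (t : ℕ) :
    ∑ i ∈ Finset.Icc 1 t, uA v a b i
      = t / 2 - ∑ i ∈ Finset.Icc 1 t, (b i).sign * (cumul v (a i) - 1 / 2) := by
  have huA : ∀ i, uA v a b i = 1 / 2 - (b i).sign * (cumul v (a i) - 1 / 2) := fun i => by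
    unfold uA; cases b i <;> simp only [Choice.sign, reduceCtorEq, if_true, if_false] <;> ring
  simp only [huA, Finset.sum_sub_distrib, Finset.sum_const, Nat.card_Icc, nsmul_eq_mul,
    add_tsub_cancel_right]
  ring

theorem alice_enforces_equitable_payoffs_general
    (δ Δ : ℝ) (hδ : 0 < δ)
    (vA : ℝ → ℝ) (hA : IsDensity δ Δ vA) :
    ∃ SA : AliceStrategy,
      (∀ t h₁ h₂, SA t h₁ h₂ ∈ Set.Icc (0:ℝ) 1) ∧
      ∀ (a : ℕ → ℝ) (b : ℕ → Choice),
        (∀ t : ℕ, a (t+1) = SA t (fun i => a (i.1+1)) (fun i => b (i.1+1))) →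
        ∀ t : ℕ, 3 ≤ t →
          (∀ vB : ℝ → ℝ,
            IntervalIntegrable vB volume 0 1 →
            (∀ x ∈ Set.Icc (0:ℝ) 1, 0 ≤ vB x ∧ vB x ≤ Δ) →
            (∫ y in (0:ℝ)..1, vB y) = 1 →
            ∑ i ∈ Finset.Icc 1 t, uB vB a b i ≤
              (t : ℝ) * (1/2 + (5 * Δ + 11) / Real.log (2 * t / 5))) ∧
          (t : ℝ) * (1/2 - 4 / Real.sqrt ((t : ℝ) - 1)) ≤
            ∑ i ∈ Finset.Icc 1 t, uA vA a b i := by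
  obtain ⟨hvA, hbdA, htotA⟩ := hA
  have hFA : IsSlopeBoundedCDF Δ (cumul vA) :=
    isSlopeBoundedCDF_cumul hvA (fun x hx => ⟨hδ.le.trans (hbdA x hx).1, (hbdA x hx).2⟩) htotA
  have hΔ : 0 < Δ := zero_lt_one.trans_le hFA.one_le
  have hη := stepSize_pos hΔ
  obtain ⟨m, hm, hmedian⟩ := exists_cumul_eq_half hvA htotA
  refine ⟨descentStrategy (stepSize Δ) m,
    fun t _ _ => cutSeq_mem (fun k => (hη k).le) hm _, ?_⟩
  intro a b ha t ht
  have hcuts : ∀ F : ℝ → ℝ, ∑ i ∈ Finset.Icc 1 t, (b i).sign * (F (a i) - 1 / 2)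
      = ∑ i ∈ Finset.Icc 1 t, (b i).sign * (F (cutSeq (stepSize Δ) m b i) - 1 / 2) := fun F =>
    Finset.sum_congr rfl fun i hi => by
      rw [eq_cutSeq_of_forall_eq_descentStrategy ha (Finset.mem_Icc.1 hi).1]
  refine ⟨fun vB hvB hbdB htotB => ?_, ?_⟩
  · have hFB := isSlopeBoundedCDF_cumul hvB hbdB htotB
    have hregret := hFB.sum_sign_mul_le hη hm
      (fun x hx => hFB.potential_sub_potential_le_half hm hx) b t
    have : (t : ℝ) * (1 / 2 + (5 * Δ + 11) / Real.log (2 * t / 5))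
        = t / 2 + (5 * Δ + 11) * t / Real.log (2 * t / 5) := by ring
    rw [sum_uB_eq, hcuts, this]
    linarith [sum_mul_stepSize_le hΔ t, sum_half_div_stepSize_le hΔ.le t,
      two_mul_sqrt_two_mul_sqrt_add_le_div_log (x := t) hΔ.le (by exact_mod_cast ht)]
  · have hregret := hFA.sum_sign_mul_le hη hm (B := 0)
      (fun x hx => sub_nonpos.2 (hFA.potential_le_of_map_eq_half hm hmedian hx)) b t
    simp only [zero_div, Finset.sum_const_zero, add_zero] at hregret
    have : (t : ℝ) * (1 / 2 - 4 / √(t - 1)) = t / 2 - 4 * t / √(t - 1) := by ring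
    rw [sum_uA_eq, hcuts, this]
    linarith [sum_mul_stepSize_le hΔ t, two_mul_sqrt_two_mul_sqrt_le_div_sqrt_sub_one
      (x := t) (by exact_mod_cast (by omega : 1 < t))]

/-- Alice has a horizon-independent pure strategy such that, on every
trajectory it generates, every Bob with density bounded above by `Δ` has average payoff at
most `1/2 + (5Δ+11)/ln(2t/5)` while Alice's average payoff is at least `1/2 − 4/√(t−1)`,
for every `t ≥ 3`. -/
theorem alice_enforces_equitable_payoffs
    (δ Δ : ℝ) (hδ : 0 < δ) (hδΔ : δ ≤ Δ)
    (vA : ℝ → ℝ) (hA : IsDensity δ Δ vA) :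
    ∃ SA : AliceStrategy,
      (∀ t h₁ h₂, SA t h₁ h₂ ∈ Set.Icc (0:ℝ) 1) ∧
      ∀ (a : ℕ → ℝ) (b : ℕ → Choice),
        (∀ t : ℕ, a (t+1) = SA t (fun i => a (i.1+1)) (fun i => b (i.1+1))) →
        ∀ t : ℕ, 3 ≤ t →
          (∀ vB : ℝ → ℝ,
            IntervalIntegrable vB volume 0 1 →
            (∀ x ∈ Set.Icc (0:ℝ) 1, 0 ≤ vB x ∧ vB x ≤ Δ) →
            (∫ y in (0:ℝ)..1, vB y) = 1 →
            ∑ i ∈ Finset.Icc 1 t, uB vB a b i ≤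
              (t : ℝ) * (1/2 + (5 * Δ + 11) / Real.log (2 * t / 5))) ∧
          (t : ℝ) * (1/2 - 4 / Real.sqrt ((t : ℝ) - 1)) ≤
            ∑ i ∈ Finset.Icc 1 t, uA vA a b i :=
  alice_enforces_equitable_payoffs_general δ Δ hδ vA hA
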